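/- arXiv:1412.1236 — 2 statements merged into one kernel-verified Lean document; each statement's English description precedes it below -/
import Mathlib

section
/- Let A be a real symmetric positive semidefinite n×n matrix with kernel spanned by the all-ones vector, let G⋆ = A†, and suppose all diagonal entries of G⋆ equal a common value C₀. Then for every u ∈ ℂⁿ with Σ_j u(j) = 0, (max_{0≤j≤n-1} |u(j)|)² ≤ C₀ · u* A u, and this constant is best possible: equality holds for u = G⋆ δ_{j₀} for each column index j₀. -/
open Matrix

def IsMoorePenrose {n : ℕ} (A G : Matrix (Fin n) (Fin n) ℝ) : Prop :=
  A * G * A = A ∧ G * A * G = G ∧ (A * G)ᵀ = A * G ∧ (G * A)ᵀ = G * A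

/-! For real `x` with `∑ x = 0`, the kernel condition makes `G A` act as the identity on `x`,
and `G` is symmetric (`Gᵀ` is a Moore–Penrose inverse of `Aᵀ = A`, and these are unique), so
`x j = (G δⱼ)ᵀ A x`. Cauchy–Schwarz for the semidefinite form `A` then gives
`x j ^ 2 ≤ ((G δⱼ)ᵀ A G δⱼ) (xᵀ A x) = (G A G) j j (xᵀ A x) = G j j (xᵀ A x)`.
A complex `u` is split into real and imaginary parts, whose energies add up to `Re (u* A u)`.
For `u = G δⱼ₀`, which sums to zero since `1ᵀ G = 0`, the energy is `G j₀ j₀ = C₀`, so every entry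
is at most `C₀` while the entry `j₀` equals `C₀`. -/

namespace Matrix

variable {ι : Type*} [Fintype ι]

theorem PosSemidef.dotProduct_mulVec_sq_le {A : Matrix ι ι ℝ} (hA : A.PosSemidef)
    (v w : ι → ℝ) : (v ⬝ᵥ A *ᵥ w) ^ 2 ≤ (v ⬝ᵥ A *ᵥ v) * (w ⬝ᵥ A *ᵥ w) := by
  classical
  have hsymm : A.toBilin'.IsSymm := isSymm_toBilin'_iff_isSymm.2 (isHermitian_iff_isSymm.1 hA.1)
  simpa only [toBilin'_apply'] using
    A.toBilin'.apply_sq_le_of_symm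
      (fun x ↦ by simpa [toBilin'_apply'] using hA.dotProduct_mulVec_nonneg x)
      (LinearMap.BilinForm.isSymm_iff.1 hsymm) v w

theorem re_star_dotProduct_map_ofReal_mulVec (A : Matrix ι ι ℝ) (u : ι → ℂ) :
    (star u ⬝ᵥ A.map Complex.ofReal *ᵥ u).re =
      (fun j ↦ (u j).re) ⬝ᵥ A *ᵥ (fun j ↦ (u j).re) +
        (fun j ↦ (u j).im) ⬝ᵥ A *ᵥ (fun j ↦ (u j).im) := by
  simp only [dotProduct, mulVec, map_apply, Pi.star_apply, Complex.re_sum, Finset.mul_sum,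
    ← Finset.sum_add_distrib, Complex.mul_re, Complex.mul_im, Complex.ofReal_re,
    Complex.ofReal_im, RCLike.star_def, Complex.conj_re, Complex.conj_im]
  refine Finset.sum_congr rfl fun i _ ↦ Finset.sum_congr rfl fun j _ ↦ ?_
  ring

theorem map_ofReal_mulVec_single_one [DecidableEq ι]
    (M : Matrix ι ι ℝ) (j : ι) :
    M.map Complex.ofReal *ᵥ Pi.single j 1 = fun i ↦ ((M *ᵥ Pi.single j 1) i : ℂ) := by
  ext i
  simp

end Matrix

namespace IsMoorePenrose

variable {n : ℕ} {A G : Matrix (Fin n) (Fin n) ℝ}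

theorem unique {H : Matrix (Fin n) (Fin n) ℝ} (hG : IsMoorePenrose A G)
    (hH : IsMoorePenrose A H) : G = H := by
  obtain ⟨g1, g2, g3, g4⟩ := hG
  obtain ⟨h1, h2, h3, h4⟩ := hH
  have hAG : A * G = A * H := by
    calc A * G = (A * H * A * G)ᵀ := by rw [h1, g3]
      _ = (A * G) * (A * H) := by rw [mul_assoc _ A, transpose_mul, g3, h3]
      _ = A * H := by rw [← mul_assoc, g1]
  have hGA : G * A = H * A := by
    calc G * A = (G * A * (H * A))ᵀ := by rw [← mul_assoc, mul_assoc G A H, mul_assoc G, h1, g4]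
      _ = (H * A) * (G * A) := by rw [transpose_mul, g4, h4]
      _ = H * A := by rw [mul_assoc, ← mul_assoc A, g1]
  calc G = G * A * G := g2.symm
    _ = H * A * H := by rw [hGA, mul_assoc, hAG, ← mul_assoc]
    _ = H := h2

theorem transpose (hG : IsMoorePenrose A G) : IsMoorePenrose Aᵀ Gᵀ := by
  obtain ⟨h1, h2, h3, h4⟩ := hG
  refine ⟨?_, ?_, ?_, ?_⟩
  · rw [← transpose_mul, ← transpose_mul, ← mul_assoc, h1]
  · rw [← transpose_mul, ← transpose_mul, ← mul_assoc, h2]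
  · rw [← transpose_mul, h4, h4]
  · rw [← transpose_mul, h3, h3]

theorem transpose_eq_self (hG : IsMoorePenrose A G) (hA : Aᵀ = A) : Gᵀ = G :=
  (hA ▸ hG.transpose).unique hG

theorem one_vecMul_mul_eq_zero (hG : IsMoorePenrose A G) (hA1 : A *ᵥ 1 = 0) :
    1 ᵥ* (G * A) = 0 := by
  rw [← hG.2.2.2, vecMul_transpose, ← mulVec_mulVec, hA1, mulVec_zero]

theorem sum_mulVec_eq_zero (hG : IsMoorePenrose A G) (hA1 : A *ᵥ 1 = 0) (v : Fin n → ℝ) :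
    ∑ i, (G *ᵥ v) i = 0 := by
  have h1G : 1 ᵥ* G = 0 := by
    rw [← hG.2.1, ← vecMul_vecMul, hG.one_vecMul_mul_eq_zero hA1, zero_vecMul]
  rw [← one_dotProduct, dotProduct_mulVec, h1G, zero_dotProduct]

theorem mul_mulVec_eq_self (hG : IsMoorePenrose A G)
    (hker : ∀ v : Fin n → ℝ, A *ᵥ v = 0 ↔ ∃ c : ℝ, v = fun _ ↦ c)
    {x : Fin n → ℝ} (hx : ∑ i, x i = 0) : (G * A) *ᵥ x = x := by
  -- `G A x - x` lies in `ker A`, so it is a constant vector; it also sums to zero.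
  obtain ⟨c, hc⟩ := (hker _).1 (show A *ᵥ ((G * A) *ᵥ x - x) = 0 by
    rw [mulVec_sub, mulVec_mulVec, ← mul_assoc, hG.1, sub_self])
  have hsum : ∑ i, ((G * A) *ᵥ x - x) i = 0 := by
    rw [← one_dotProduct, dotProduct_sub, dotProduct_mulVec,
      hG.one_vecMul_mul_eq_zero ((hker 1).2 ⟨1, rfl⟩), zero_dotProduct, one_dotProduct, hx,
      sub_zero]
  refine sub_eq_zero.1 (funext fun i ↦ ?_)
  rw [hc, Finset.sum_const, Finset.card_univ, Fintype.card_fin, nsmul_eq_mul] at hsum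
  have hc0 : c = 0 := (mul_eq_zero.1 hsum).resolve_left (Nat.cast_ne_zero.2 i.pos.ne')
  rw [hc, hc0, Pi.zero_apply]

theorem apply_eq_dotProduct_mulVec (hG : IsMoorePenrose A G) (hA : Aᵀ = A)
    (hker : ∀ v : Fin n → ℝ, A *ᵥ v = 0 ↔ ∃ c : ℝ, v = fun _ ↦ c)
    {x : Fin n → ℝ} (hx : ∑ i, x i = 0) (j : Fin n) :
    x j = (G *ᵥ Pi.single j 1) ⬝ᵥ A *ᵥ x := by
  calc x j = Pi.single j 1 ⬝ᵥ (G * A) *ᵥ x := by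
        rw [hG.mul_mulVec_eq_self hker hx, single_one_dotProduct]
    _ = (G *ᵥ Pi.single j 1) ⬝ᵥ A *ᵥ x := by
        rw [← mulVec_mulVec, dotProduct_mulVec, ← mulVec_transpose, hG.transpose_eq_self hA]

theorem mulVec_single_dotProduct_mulVec (hG : IsMoorePenrose A G) (hA : Aᵀ = A) (j : Fin n) :
    (G *ᵥ Pi.single j 1) ⬝ᵥ A *ᵥ (G *ᵥ Pi.single j 1) = G j j := by
  calc (G *ᵥ Pi.single j 1) ⬝ᵥ A *ᵥ (G *ᵥ Pi.single j 1)
      = (Pi.single j 1 ᵥ* G) ⬝ᵥ A *ᵥ (G *ᵥ Pi.single j 1) := by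
        rw [← mulVec_transpose, hG.transpose_eq_self hA]
    _ = Pi.single j 1 ⬝ᵥ (G * A * G) *ᵥ Pi.single j 1 := by
        rw [← dotProduct_mulVec, mulVec_mulVec, mulVec_mulVec]
    _ = G j j := by rw [hG.2.1, single_one_dotProduct, mulVec_single_one, col_apply]

theorem diag_nonneg (hG : IsMoorePenrose A G) (hA : A.PosSemidef) (j : Fin n) : 0 ≤ G j j := by
  rw [← hG.mulVec_single_dotProduct_mulVec (isHermitian_iff_isSymm.1 hA.1) j]
  simpa using hA.dotProduct_mulVec_nonneg (G *ᵥ Pi.single j 1)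

theorem apply_sq_le (hG : IsMoorePenrose A G) (hA : A.PosSemidef)
    (hker : ∀ v : Fin n → ℝ, A *ᵥ v = 0 ↔ ∃ c : ℝ, v = fun _ ↦ c)
    {x : Fin n → ℝ} (hx : ∑ i, x i = 0) (j : Fin n) :
    x j ^ 2 ≤ G j j * (x ⬝ᵥ A *ᵥ x) := by
  have hA' : Aᵀ = A := isHermitian_iff_isSymm.1 hA.1
  rw [hG.apply_eq_dotProduct_mulVec hA' hker hx j, ← hG.mulVec_single_dotProduct_mulVec hA' j]
  exact hA.dotProduct_mulVec_sq_le _ _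

theorem norm_apply_sq_le (hG : IsMoorePenrose A G) (hA : A.PosSemidef)
    (hker : ∀ v : Fin n → ℝ, A *ᵥ v = 0 ↔ ∃ c : ℝ, v = fun _ ↦ c)
    {u : Fin n → ℂ} (hu : ∑ i, u i = 0) (j : Fin n) :
    ‖u j‖ ^ 2 ≤ G j j * (star u ⬝ᵥ A.map Complex.ofReal *ᵥ u).re := by
  have hre := hG.apply_sq_le hA hker (x := fun i ↦ (u i).re)
    (by rw [← Complex.re_sum, hu, Complex.zero_re]) j
  have him := hG.apply_sq_le hA hker (x := fun i ↦ (u i).im)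
    (by rw [← Complex.im_sum, hu, Complex.zero_im]) j
  rw [Complex.sq_norm, Complex.normSq_apply, re_star_dotProduct_map_ofReal_mulVec, mul_add]
  linarith

theorem re_star_dotProduct_mulVec_single (hG : IsMoorePenrose A G) (hA : Aᵀ = A) (j : Fin n) :
    (star (G.map Complex.ofReal *ᵥ Pi.single j 1) ⬝ᵥ
      A.map Complex.ofReal *ᵥ (G.map Complex.ofReal *ᵥ Pi.single j 1)).re = G j j := by
  rw [map_ofReal_mulVec_single_one, re_star_dotProduct_map_ofReal_mulVec]
  simp only [Complex.ofReal_re, Complex.ofReal_im, ← Pi.zero_def, zero_dotProduct, add_zero]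
  exact hG.mulVec_single_dotProduct_mulVec hA j

theorem sq_iSup_norm_le (hG : IsMoorePenrose A G) (hA : A.PosSemidef)
    (hker : ∀ v : Fin n → ℝ, A *ᵥ v = 0 ↔ ∃ c : ℝ, v = fun _ ↦ c)
    {C₀ : ℝ} (hdiag : ∀ j, G j j = C₀) {u : Fin n → ℂ} (hu : ∑ i, u i = 0) :
    (⨆ j, ‖u j‖) ^ 2 ≤ C₀ * (star u ⬝ᵥ A.map Complex.ofReal *ᵥ u).re := by
  rcases isEmpty_or_nonempty (Fin n) with hn | hn
  · simp [dotProduct]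
  obtain ⟨j, hj⟩ := exists_eq_ciSup_of_finite (f := fun j ↦ ‖u j‖)
  rw [← hj, ← hdiag j]
  exact hG.norm_apply_sq_le hA hker hu j

theorem iSup_norm_map_ofReal_mulVec_single (hG : IsMoorePenrose A G) (hA : A.PosSemidef)
    (hker : ∀ v : Fin n → ℝ, A *ᵥ v = 0 ↔ ∃ c : ℝ, v = fun _ ↦ c)
    {C₀ : ℝ} (hdiag : ∀ j, G j j = C₀) (j₀ : Fin n) :
    ⨆ j, ‖(G.map Complex.ofReal *ᵥ Pi.single j₀ 1) j‖ = C₀ := by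
  have : Nonempty (Fin n) := ⟨j₀⟩
  set u := G.map Complex.ofReal *ᵥ Pi.single j₀ 1 with hu_def
  have hA' : Aᵀ = A := isHermitian_iff_isSymm.1 hA.1
  have hu : ∑ i, u i = 0 := by
    rw [hu_def, map_ofReal_mulVec_single_one, ← Complex.ofReal_sum,
      hG.sum_mulVec_eq_zero ((hker 1).2 ⟨1, rfl⟩), Complex.ofReal_zero]
  have hC₀ : 0 ≤ C₀ := hdiag j₀ ▸ hG.diag_nonneg hA j₀
  have hle (j : Fin n) : ‖u j‖ ≤ C₀ := by
    have := hG.norm_apply_sq_le hA hker hu j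
    rw [hG.re_star_dotProduct_mulVec_single hA', hdiag, hdiag, ← sq] at this
    exact (pow_le_pow_iff_left₀ (norm_nonneg _) hC₀ two_ne_zero).1 this
  have hj₀ : ‖u j₀‖ = C₀ := by simp [u, hdiag, abs_of_nonneg hC₀]
  exact le_antisymm (ciSup_le hle) (le_ciSup_of_le (Set.finite_range _).bddAbove j₀ hj₀.ge)

end IsMoorePenrose

theorem stmt3_general {n : ℕ} (A G : Matrix (Fin n) (Fin n) ℝ)
    (hpsd : A.PosSemidef)
    (hker : ∀ v : Fin n → ℝ, A.mulVec v = 0 ↔ ∃ c : ℝ, v = fun _ => c)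
    (hG : IsMoorePenrose A G)
    (C₀ : ℝ) (hdiag : ∀ j, G j j = C₀) :
    (∀ u : Fin n → ℂ, ∑ j, u j = 0 →
      (⨆ j, ‖u j‖) ^ 2 ≤
        C₀ * (star u ⬝ᵥ (A.map (Complex.ofReal)).mulVec u).re) ∧
    (∀ j₀ : Fin n,
      ((⨆ j, ‖(G.map (Complex.ofReal)).mulVec (Pi.single j₀ 1) j‖) ^ 2 =
        C₀ * (star ((G.map (Complex.ofReal)).mulVec (Pi.single j₀ 1)) ⬝ᵥ
          (A.map (Complex.ofReal)).mulVec
            ((G.map (Complex.ofReal)).mulVec (Pi.single j₀ 1))).re)) := by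
  refine ⟨fun u hu ↦ hG.sq_iSup_norm_le hpsd hker hdiag hu, fun j₀ ↦ ?_⟩
  rw [hG.iSup_norm_map_ofReal_mulVec_single hpsd hker hdiag j₀,
    hG.re_star_dotProduct_mulVec_single (isHermitian_iff_isSymm.1 hpsd.1), hdiag, sq]

theorem stmt3 {n : ℕ} (hn : 0 < n) (A G : Matrix (Fin n) (Fin n) ℝ)
    (hsymm : Aᵀ = A) (hpsd : A.PosSemidef)
    (hker : ∀ v : Fin n → ℝ, A.mulVec v = 0 ↔ ∃ c : ℝ, v = fun _ => c)
    (hG : IsMoorePenrose A G)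
    (C₀ : ℝ) (hdiag : ∀ j, G j j = C₀) :
    (∀ u : Fin n → ℂ, ∑ j, u j = 0 →
      (⨆ j, ‖u j‖) ^ 2 ≤
        C₀ * (star u ⬝ᵥ (A.map (Complex.ofReal)).mulVec u).re) ∧
    (∀ j₀ : Fin n,
      ((⨆ j, ‖(G.map (Complex.ofReal)).mulVec (Pi.single j₀ 1) j‖) ^ 2 =
        C₀ * (star ((G.map (Complex.ofReal)).mulVec (Pi.single j₀ 1)) ⬝ᵥ
          (A.map (Complex.ofReal)).mulVec
            ((G.map (Complex.ofReal)).mulVec (Pi.single j₀ 1))).re)) :=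
  stmt3_general A G hpsd hker hG C₀ hdiag
end

section
/- Let A be an n×n positive semidefinite Hermitian matrix with kernel spanned by the all-ones vector, G⋆ = A†, and suppose all diagonal entries of G⋆ equal C₀. Then for each j, E(G⋆ δ_j) = (G⋆ δ_j)* A (G⋆ δ_j) = C₀, and max_{0≤i≤n-1} |(G⋆ δ_j)(i)| = C₀; hence equality is attained in the Sobolev inequality (max_i |u(i)|)² ≤ C₀ E(u) by u = G⋆ δ_j. -/
open Matrix
open scoped ComplexOrder

/-- The four Penrose conditions for a complex matrix. -/
def IsMoorePenroseC {n : ℕ} (A G : Matrix (Fin n) (Fin n) ℂ) : Prop :=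
  A * G * A = A ∧ G * A * G = G ∧ (A * G)ᴴ = A * G ∧ (G * A)ᴴ = G * A

/-!
Since `A` is Hermitian, `Gᴴ` satisfies the Penrose conditions as well, so `Gᴴ = G` by uniqueness;
then `G = G A Gᴴ` is positive semidefinite. For `u = G δⱼ` the identity `G A G = G` gives
`E(u) = δⱼ* G δⱼ = G j j = C₀`, while `u i = G i j` and the `2 × 2` principal minors of `G` give
`|G i j|² ≤ G i i * G j j = C₀²`, with equality at `i = j`.
-/

theorem Matrix.PosSemidef.norm_apply_sq_le {𝕜 n : Type*} [RCLike 𝕜] [Fintype n]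
    {M : Matrix n n 𝕜} (hM : M.PosSemidef) (i j : n) :
    ‖M i j‖ ^ 2 ≤ RCLike.re (M i i) * RCLike.re (M j j) := by
  have hdet := (hM.submatrix ![i, j]).det_nonneg
  rw [det_fin_two] at hdet
  simp only [submatrix_apply, Matrix.cons_val_zero, Matrix.cons_val_one] at hdet
  rw [← hM.1.apply j i, ← hM.1.coe_re_apply_self i, ← hM.1.coe_re_apply_self j, mul_comm (M i j),
    RCLike.star_def, RCLike.conj_mul] at hdet
  exact sub_nonneg.mp (by exact_mod_cast hdet)

theorem Matrix.PosSemidef.norm_apply_le_of_diag_eq {𝕜 n : Type*} [RCLike 𝕜] [Fintype n]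
    {M : Matrix n n 𝕜} (hM : M.PosSemidef) {c : ℝ} (hc : 0 ≤ c) (hdiag : ∀ k, M k k = c)
    (i j : n) : ‖M i j‖ ≤ c := by
  have h := hM.norm_apply_sq_le i j
  rw [hdiag, hdiag, RCLike.ofReal_re, ← sq] at h
  exact (pow_le_pow_iff_left₀ (norm_nonneg _) hc two_ne_zero).mp h

theorem Matrix.star_mulVec_dotProduct_mulVec_mulVec {R n : Type*} [CommRing R] [StarRing R]
    [Fintype n] {A G : Matrix n n R} (hG : G.IsHermitian) (hGAG : G * A * G = G) (x : n → R) :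
    star (G *ᵥ x) ⬝ᵥ A *ᵥ (G *ᵥ x) = star x ⬝ᵥ G *ᵥ x := by
  rw [star_mulVec, mulVec_mulVec, dotProduct_mulVec, vecMul_vecMul, hG.eq, ← mul_assoc, hGAG,
    ← dotProduct_mulVec]

namespace IsMoorePenroseC

variable {n : ℕ} {A G : Matrix (Fin n) (Fin n) ℂ}

theorem unique {G' : Matrix (Fin n) (Fin n) ℂ} (hG : IsMoorePenroseC A G)
    (hG' : IsMoorePenroseC A G') : G = G' := by
  obtain ⟨h1, h2, h3, h4⟩ := hG
  obtain ⟨h1', h2', h3', h4'⟩ := hG'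
  have hAG : A * G = A * G' := by
    calc A * G = (A * G' * A * G)ᴴ := by rw [h1', h3]
      _ = (A * G)ᴴ * (A * G')ᴴ := by simp only [conjTranspose_mul, mul_assoc]
      _ = A * G' := by rw [h3, h3', ← mul_assoc, h1]
  have hGA : G * A = G' * A := by
    calc G * A = (G * A * G' * A)ᴴ := by rw [mul_assoc, mul_assoc, ← mul_assoc A, h1', h4]
      _ = (G' * A)ᴴ * (G * A)ᴴ := by simp only [conjTranspose_mul, mul_assoc]
      _ = G' * A := by rw [h4, h4', mul_assoc, ← mul_assoc A, h1]
  calc G = G * A * G := h2.symm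
    _ = G' * A * G' := by rw [hGA, mul_assoc, hAG, ← mul_assoc]
    _ = G' := h2'

theorem conjTranspose (hG : IsMoorePenroseC A G) : IsMoorePenroseC Aᴴ Gᴴ := by
  obtain ⟨h1, h2, h3, h4⟩ := hG
  refine ⟨?_, ?_, ?_, ?_⟩
  · rw [← conjTranspose_mul, ← conjTranspose_mul, ← mul_assoc, h1]
  · rw [← conjTranspose_mul, ← conjTranspose_mul, ← mul_assoc, h2]
  · rw [← conjTranspose_mul, h4, h4]
  · rw [← conjTranspose_mul, h3, h3]

theorem isHermitian (hA : A.IsHermitian) (hG : IsMoorePenroseC A G) : G.IsHermitian :=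
  (hG.conjTranspose.unique (hA.eq.symm ▸ hG) :)

theorem posSemidef (hA : A.PosSemidef) (hG : IsMoorePenroseC A G) : G.PosSemidef := by
  have h := hA.mul_mul_conjTranspose_same G
  rwa [(hG.isHermitian hA.1).eq, hG.2.1] at h

end IsMoorePenroseC

theorem stmt17_general {n : ℕ} (A G : Matrix (Fin n) (Fin n) ℂ)
    (hpsd : A.PosSemidef)
    (hG : IsMoorePenroseC A G)
    (C₀ : ℝ) (hdiag : ∀ j, G j j = (C₀ : ℂ)) :
    ∀ j : Fin n,
      star (G.mulVec (Pi.single j 1)) ⬝ᵥ A.mulVec (G.mulVec (Pi.single j 1)) = (C₀ : ℂ) ∧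
      (⨆ i, ‖G.mulVec (Pi.single j 1) i‖) = C₀ ∧
      (⨆ i, ‖G.mulVec (Pi.single j 1) i‖) ^ 2 =
        C₀ * (star (G.mulVec (Pi.single j 1)) ⬝ᵥ A.mulVec (G.mulVec (Pi.single j 1))).re := by
  intro j
  have : Nonempty (Fin n) := ⟨j⟩
  have hGpsd := hG.posSemidef hpsd
  have hC₀ : 0 ≤ C₀ := Complex.zero_le_real.mp (hdiag j ▸ hGpsd.diag_nonneg)
  have hE : star (G *ᵥ Pi.single j 1) ⬝ᵥ A *ᵥ (G *ᵥ Pi.single j 1) = (C₀ : ℂ) := by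
    rw [star_mulVec_dotProduct_mulVec_mulVec hGpsd.1 hG.2.1, mulVec_single_one, Pi.star_single,
      star_one, single_one_dotProduct, col_apply, hdiag]
  have hsup : (⨆ i, ‖(G *ᵥ Pi.single j 1) i‖) = C₀ := by
    simp only [mulVec_single_one, col_apply]
    refine le_antisymm (ciSup_le fun i => hGpsd.norm_apply_le_of_diag_eq hC₀ hdiag i j) ?_
    refine le_ciSup_of_le (Set.finite_range _).bddAbove j ?_
    rw [hdiag, Complex.norm_real, Real.norm_of_nonneg hC₀]
  refine ⟨hE, hsup, ?_⟩
  rw [hE, hsup, Complex.ofReal_re, sq]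

theorem stmt17 {n : ℕ} (hn : 0 < n) (A G : Matrix (Fin n) (Fin n) ℂ)
    (hherm : A.IsHermitian) (hpsd : A.PosSemidef)
    (hker : ∀ v : Fin n → ℂ, A.mulVec v = 0 ↔ ∃ c : ℂ, v = fun _ => c)
    (hG : IsMoorePenroseC A G)
    (C₀ : ℝ) (hC₀ : 0 < C₀) (hdiag : ∀ j, G j j = (C₀ : ℂ)) :
    ∀ j : Fin n,
      star (G.mulVec (Pi.single j 1)) ⬝ᵥ A.mulVec (G.mulVec (Pi.single j 1)) = (C₀ : ℂ) ∧
      (⨆ i, ‖G.mulVec (Pi.single j 1) i‖) = C₀ ∧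
      (⨆ i, ‖G.mulVec (Pi.single j 1) i‖) ^ 2 =
        C₀ * (star (G.mulVec (Pi.single j 1)) ⬝ᵥ A.mulVec (G.mulVec (Pi.single j 1))).re :=
  stmt17_general A G hpsd hG C₀ hdiag
end
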